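/- arXiv:1305.5776 — 8 statements merged into one kernel-verified Lean document; each statement's English description precedes it below -/
import Mathlib

section
/- If ζ₁, ζ₂ ≥ 0, 0 ≤ z ≤ 1, and r·exp(i·0) = z·exp(i·ζ₁) + (1−z)·exp(−i·ζ₂) for real r with r = cos(β) and 0 ≤ β ≤ π/2, then ζ₁ + ζ₂ ≥ 2β. -/
open Real Complex

theorem stmt0 (r β ζ₁ ζ₂ z : ℝ)
    (hζ₁ : 0 ≤ ζ₁) (hζ₂ : 0 ≤ ζ₂) (hz0 : 0 ≤ z) (hz1 : z ≤ 1)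
    (hr : r = Real.cos β) (hβ0 : 0 ≤ β) (hβ1 : β ≤ Real.pi / 2)
    (h : (r : ℂ) = (z : ℂ) * Complex.exp (ζ₁ * Complex.I) +
        ((1 : ℂ) - z) * Complex.exp (-ζ₂ * Complex.I)) :
    2 * β ≤ ζ₁ + ζ₂ := by
  have hπ := Real.pi_pos
  have h' : (r : ℂ) = (z : ℂ) * Complex.exp ((ζ₁ : ℝ) * Complex.I) +
      ((1 : ℂ) - z) * Complex.exp (((-ζ₂ : ℝ) : ℂ) * Complex.I) := by
    push_cast; exact h
  rw [Complex.exp_mul_I, Complex.exp_mul_I, Complex.ext_iff] at h'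
  push_cast at h'
  simp only [Complex.add_re, Complex.mul_re, Complex.add_im, Complex.mul_im,
    Complex.cos_ofReal_re, Complex.sin_ofReal_re, Complex.cos_ofReal_im,
    Complex.sin_ofReal_im, Complex.I_re, Complex.I_im, Complex.ofReal_re,
    Complex.ofReal_im, Complex.sub_re, Complex.sub_im, Complex.one_re,
    Complex.one_im, Complex.cos_neg, Complex.sin_neg, Complex.neg_re, Complex.neg_im,
    Real.cos_neg, Real.sin_neg] at h'
  obtain ⟨h1, h2⟩ := h'
  have hp1 := Real.sin_sq_add_cos_sq ζ₁
  have hp2 := Real.sin_sq_add_cos_sq ζ₂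
  have hpβ := Real.sin_sq_add_cos_sq β
  rw [hr] at h1
  have e1 : Real.cos β = z * Real.cos ζ₁ + (1 - z) * Real.cos ζ₂ := by
    linear_combination h1
  have e2 : z * Real.sin ζ₁ - (1 - z) * Real.sin ζ₂ = 0 := by
    linear_combination -h2
  have hkey : Real.cos β ^ 2 =
      z^2 + (1-z)^2 + 2*z*(1-z)*Real.cos (ζ₁ + ζ₂) := by
    rw [Real.cos_add]
    linear_combination (Real.cos β + (z * Real.cos ζ₁ + (1 - z) * Real.cos ζ₂)) * e1 +
      z^2 * hp1 + (1-z)^2 * hp2 - (z * Real.sin ζ₁ - (1 - z) * Real.sin ζ₂) * e2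
  have hsin : Real.sin β ^ 2 = 2*z*(1-z)*(1 - Real.cos (ζ₁+ζ₂)) := by nlinarith
  by_cases hs : Real.pi ≤ ζ₁ + ζ₂
  · linarith
  · push_neg at hs
    by_contra hc
    push_neg at hc
    have hcl : Real.cos (2*β) < Real.cos (ζ₁+ζ₂) :=
      Real.cos_lt_cos_of_nonneg_of_le_pi (by linarith) (by linarith) hc
    have h2β : Real.cos (2*β) = 1 - 2 * Real.sin β ^ 2 := by
      rw [Real.cos_two_mul]; linarith
    have h3 : 1 - Real.cos (ζ₁+ζ₂) ≥ 0 := by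
      have := Real.cos_le_one (ζ₁+ζ₂); linarith
    nlinarith [sq_nonneg (2*z - 1)]
end

section
/- Let Ũ be the 2×2 matrix with rows (re^{iγ}, −e^{i(θ₁+θ₂)}√(1−r²)) and (√(1−r²), e^{i(θ₁+θ₂)}re^{−iγ}) where r ∈ [0,1], and suppose re^{iγ} = z·e^{iθ₁} + (1−z)·e^{iθ₂} for some z ∈ [0,1]. Then the eigenvalues of Ũ are e^{iθ₁} and e^{iθ₂}. -/
open Polynomial Complex

theorem stmt4 (r γ θ₁ θ₂ z : ℝ) (hr0 : 0 ≤ r) (hr1 : r ≤ 1) (hz0 : 0 ≤ z) (hz1 : z ≤ 1)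
    (h : (r : ℂ) * Complex.exp (γ * Complex.I)
        = (z : ℂ) * Complex.exp (θ₁ * Complex.I) + ((1 : ℂ) - z) * Complex.exp (θ₂ * Complex.I)) :
    (!![(r : ℂ) * Complex.exp (γ * Complex.I),
        -Complex.exp ((θ₁ + θ₂) * Complex.I) * (Real.sqrt (1 - r ^ 2) : ℂ);
        ((Real.sqrt (1 - r ^ 2) : ℝ) : ℂ),
        Complex.exp ((θ₁ + θ₂) * Complex.I) * r * Complex.exp (-γ * Complex.I)]).charpoly
      = (Polynomial.X - Polynomial.C (Complex.exp (θ₁ * Complex.I))) *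
        (Polynomial.X - Polynomial.C (Complex.exp (θ₂ * Complex.I))) := by
  have hconj : (r : ℂ) * Complex.exp (-γ * Complex.I)
      = (z : ℂ) * Complex.exp (-θ₁ * Complex.I) + ((1 : ℂ) - z) * Complex.exp (-θ₂ * Complex.I) := by
    have h2 := congrArg (starRingEnd ℂ) h
    simp only [map_add, map_mul, map_sub, map_one, Complex.conj_ofReal,
      ← Complex.exp_conj, Complex.conj_I, mul_neg, neg_mul] at h2
    simpa using h2
  have hm1 : Complex.exp ((θ₁ + θ₂) * Complex.I) * Complex.exp (-θ₁ * Complex.I)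
      = Complex.exp (θ₂ * Complex.I) := by
    rw [← Complex.exp_add]; ring_nf
  have hm2 : Complex.exp ((θ₁ + θ₂) * Complex.I) * Complex.exp (-θ₂ * Complex.I)
      = Complex.exp (θ₁ * Complex.I) := by
    rw [← Complex.exp_add]; ring_nf
  have hexpg : Complex.exp (γ * Complex.I) * Complex.exp (-γ * Complex.I) = 1 := by
    rw [← Complex.exp_add]; ring_nf; exact Complex.exp_zero
  have hsq : ((Real.sqrt (1 - r ^ 2) : ℝ) : ℂ) * ((Real.sqrt (1 - r ^ 2) : ℝ) : ℂ)
      = 1 - (r : ℂ) ^ 2 := by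
    have h1 : (0:ℝ) ≤ 1 - r ^ 2 := by nlinarith
    rw [← Complex.ofReal_mul, Real.mul_self_sqrt h1]
    push_cast; ring
  have htr : (r : ℂ) * Complex.exp (γ * Complex.I)
      + Complex.exp ((θ₁ + θ₂) * Complex.I) * r * Complex.exp (-γ * Complex.I)
      = Complex.exp (θ₁ * Complex.I) + Complex.exp (θ₂ * Complex.I) := by
    linear_combination h + Complex.exp ((θ₁ + θ₂) * Complex.I) * hconj
      + (z : ℂ) * hm1 + ((1:ℂ) - z) * hm2
  have hdet : (r : ℂ) * Complex.exp (γ * Complex.I)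
        * (Complex.exp ((θ₁ + θ₂) * Complex.I) * r * Complex.exp (-γ * Complex.I))
      - (-Complex.exp ((θ₁ + θ₂) * Complex.I) * (Real.sqrt (1 - r ^ 2) : ℂ))
        * ((Real.sqrt (1 - r ^ 2) : ℝ) : ℂ)
      = Complex.exp (θ₁ * Complex.I) * Complex.exp (θ₂ * Complex.I) := by
    have hAB : Complex.exp (θ₁ * Complex.I) * Complex.exp (θ₂ * Complex.I)
        = Complex.exp ((θ₁ + θ₂) * Complex.I) := by
      rw [← Complex.exp_add]; ring_nf
    linear_combination ((r:ℂ)^2 * Complex.exp ((θ₁ + θ₂) * Complex.I)) * hexpg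
      + Complex.exp ((θ₁ + θ₂) * Complex.I) * hsq - hAB
  rw [Matrix.charpoly, Matrix.det_fin_two]
  simp only [Matrix.charmatrix_apply, Matrix.diagonal, Matrix.of_apply, Matrix.cons_val',
    Matrix.cons_val_zero, Matrix.cons_val_one, Matrix.head_cons, Matrix.head_fin_const,
    Matrix.empty_val', Matrix.cons_val_fin_one]
  norm_num
  have h1 : C ((r : ℂ) * Complex.exp (γ * Complex.I))
      + C (Complex.exp ((θ₁ + θ₂) * Complex.I) * r * Complex.exp (-γ * Complex.I))
      = C (Complex.exp (θ₁ * Complex.I)) + C (Complex.exp (θ₂ * Complex.I)) := by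
    rw [← map_add, ← map_add, htr]
  have h2 : C ((r : ℂ) * Complex.exp (γ * Complex.I))
        * C (Complex.exp ((θ₁ + θ₂) * Complex.I) * r * Complex.exp (-γ * Complex.I))
      - C (-Complex.exp ((θ₁ + θ₂) * Complex.I) * (Real.sqrt (1 - r ^ 2) : ℂ))
        * C (((Real.sqrt (1 - r ^ 2) : ℝ) : ℂ))
      = C (Complex.exp (θ₁ * Complex.I)) * C (Complex.exp (θ₂ * Complex.I)) := by
    rw [← map_mul, ← map_mul, ← map_mul, ← map_sub, hdet]
  simp only [map_mul, map_neg, neg_mul, mul_neg] at h1 h2 ⊢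
  linear_combination (-(X : ℂ[X])) * h1 + h2
end

section
/- For any two unit vectors a, b in ℂ^r with r ≥ 2, there exists a unitary U with U·a = b such that every eigenvalue of U equals 1, exp(iθ), or exp(−iθ), where θ = arccos(Re⟨a,b⟩); hence the maximum absolute eigenangle of U equals arccos(Re⟨a,b⟩). -/
/-!
Write `b = c • a + β • v` with `c = ⟪a, b⟫` and `v` a unit vector orthogonal to `a`; such a `v`
exists because `r ≥ 2`. Let `U` act on the plane spanned by `a, v` through the Cayley–Klein matrix
`[[c, -β̄], [β, c̄]]` and as the identity on the orthogonal complement. The Cayley–Klein matrix is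
unitary of trace `2 Re c = 2 cos θ` and determinant `|c|² + |β|² = 1`, so `U` is unitary, `U a = b`,
and Cayley–Hamilton gives `(U² - 2 cos θ U + 1)(U - 1) = 0`, whose roots are `e^{±iθ}` and `1`.
-/

open Polynomial Module Matrix

open scoped InnerProductSpace

theorem spectrum.eval_eq_zero_of_aeval_eq_zero {𝕜 A : Type*} [Field 𝕜] [Ring A] [Algebra 𝕜 A]
    [Nontrivial A] {a : A} {p : 𝕜[X]} (hp : aeval a p = 0) {μ : 𝕜} (hμ : μ ∈ spectrum 𝕜 a) :
    p.eval μ = 0 := by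
  simpa [hp] using spectrum.subset_polynomial_aeval a p ⟨μ, hμ, rfl⟩

theorem X_sub_C_exp_mul_X_sub_C_exp (z : ℂ) :
    (X - C (Complex.exp (z * Complex.I))) * (X - C (Complex.exp (-z * Complex.I))) =
      X ^ 2 - C (2 * Complex.cos z) * X + 1 := by
  have hprod : Complex.exp (z * Complex.I) * Complex.exp (-z * Complex.I) = 1 := by
    rw [← Complex.exp_add, neg_mul, add_neg_cancel, Complex.exp_zero]
  rw [Complex.two_cos, C_add, ← C_1, ← hprod, C_mul]
  ring

theorem exists_norm_eq_one_and_eq_norm_smul {𝕜 F : Type*} [RCLike 𝕜] [NormedAddCommGroup F]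
    [NormedSpace 𝕜 F] [Nontrivial F] (x : F) : ∃ u : F, ‖u‖ = 1 ∧ x = (‖x‖ : 𝕜) • u := by
  by_cases hx : x = 0
  · obtain ⟨w, hw⟩ := exists_ne (0 : F)
    exact ⟨(‖w‖⁻¹ : 𝕜) • w, norm_smul_inv_norm hw, by simp [hx]⟩
  · refine ⟨(‖x‖⁻¹ : 𝕜) • x, norm_smul_inv_norm hx, ?_⟩
    rw [smul_smul, mul_inv_cancel₀ (by simpa using hx), one_smul]

theorem exists_orthonormal_pair_eq_inner_smul_add_smul {𝕜 E : Type*} [RCLike 𝕜]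
    [NormedAddCommGroup E] [InnerProductSpace 𝕜 E] [FiniteDimensional 𝕜 E]
    (hE : 2 ≤ finrank 𝕜 E) {a : E} (ha : ‖a‖ = 1) (b : E) :
    ∃ (v : E) (β : 𝕜), Orthonormal 𝕜 ![a, v] ∧ b = ⟪a, b⟫_𝕜 • a + β • v := by
  have hK : Nontrivial (𝕜 ∙ a)ᗮ := by
    have h := (𝕜 ∙ a).finrank_add_finrank_orthogonal
    rw [finrank_span_singleton (by rintro rfl; simp at ha)] at h
    exact Module.finrank_pos_iff (R := 𝕜).mp (by omega)
  have hd : b - ⟪a, b⟫_𝕜 • a ∈ (𝕜 ∙ a)ᗮ := by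
    rw [Submodule.mem_orthogonal_singleton_iff_inner_right, inner_sub_right, inner_smul_right,
      inner_self_eq_norm_sq_to_K, ha]
    simp
  set d : (𝕜 ∙ a)ᗮ := ⟨_, hd⟩
  obtain ⟨u, hu, hdu⟩ := exists_norm_eq_one_and_eq_norm_smul (𝕜 := 𝕜) d
  refine ⟨u, ‖d‖, ?_, ?_⟩
  · have hau := Submodule.mem_orthogonal_singleton_iff_inner_right.mp u.2
    have hu' : ‖(u : E)‖ = 1 := hu
    simp [ha, hu', hau]
  · rw [← Submodule.coe_smul, ← hdu, add_sub_cancel]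

theorem conjTranspose_mul_self_eq_one_of_orthonormal {𝕜 n k : Type*} [RCLike 𝕜] [Fintype n]
    [DecidableEq k] {f : k → EuclideanSpace 𝕜 n} (hf : Orthonormal 𝕜 f) :
    (Matrix.of fun i j => f j i)ᴴ * Matrix.of (fun i j => f j i) = 1 := by
  ext j l
  have := orthonormal_iff_ite.mp hf j l
  simp only [PiLp.inner_apply, RCLike.inner_apply] at this
  simpa [Matrix.mul_apply, Matrix.one_apply, mul_comm] using this

theorem mulVec_of_columns {𝕜 n k : Type*} [RCLike 𝕜] [Fintype k] (f : k → EuclideanSpace 𝕜 n)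
    (x : k → 𝕜) : (Matrix.of fun i j => f j i) *ᵥ x = WithLp.ofLp (∑ j, x j • f j) := by
  ext i
  simp [mulVec, dotProduct, mul_comm]

namespace Matrix

section extendByIdentity

variable {n k R : Type*} [DecidableEq n] [Fintype k] [DecidableEq k] [CommRing R] [StarRing R]
  {W : Matrix n k R}

/-- When `Wᴴ * W = 1`, this acts as `M` on the range of `W` (in the coordinates given by the columns
of `W`) and as the identity on its orthogonal complement. -/
def extendByIdentity (W : Matrix n k R) (M : Matrix k k R) : Matrix n n R :=
  1 + W * (M - 1) * Wᴴ

theorem extendByIdentity_one : extendByIdentity W 1 = 1 := by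
  rw [extendByIdentity, sub_self, Matrix.mul_zero, Matrix.zero_mul, add_zero]

theorem star_extendByIdentity (M : Matrix k k R) :
    star (extendByIdentity W M) = extendByIdentity W (star M) := by
  simp only [extendByIdentity, star_eq_conjTranspose, conjTranspose_add, conjTranspose_one,
    conjTranspose_mul, conjTranspose_conjTranspose, conjTranspose_sub, Matrix.mul_assoc]

variable [Fintype n]

theorem extendByIdentity_mul (hW : Wᴴ * W = 1) (M : Matrix k k R) :
    extendByIdentity W M * W = W * M :=
  calc extendByIdentity W M * W = W + W * (M - 1) * (Wᴴ * W) := by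
        simp only [extendByIdentity, Matrix.add_mul, Matrix.one_mul, Matrix.mul_assoc]
    _ = W * M := by rw [hW, Matrix.mul_one, Matrix.mul_sub, Matrix.mul_one, add_sub_cancel]

theorem extendByIdentity_mulVec_mulVec (hW : Wᴴ * W = 1) (M : Matrix k k R) (x : k → R) :
    extendByIdentity W M *ᵥ (W *ᵥ x) = W *ᵥ (M *ᵥ x) := by
  rw [mulVec_mulVec, extendByIdentity_mul hW, mulVec_mulVec]

theorem extendByIdentity_mul_extendByIdentity (hW : Wᴴ * W = 1) (A B : Matrix k k R) :
    extendByIdentity W A * extendByIdentity W B = extendByIdentity W (A * B) := by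
  have hAB : W * (A - 1) * Wᴴ * (W * (B - 1) * Wᴴ) = W * ((A - 1) * (B - 1)) * Wᴴ := by
    simp only [Matrix.mul_assoc, ← Matrix.mul_assoc Wᴴ, hW, Matrix.one_mul]
  calc extendByIdentity W A * extendByIdentity W B
      = 1 + (W * (A - 1) * Wᴴ + W * (B - 1) * Wᴴ + W * (A - 1) * Wᴴ * (W * (B - 1) * Wᴴ)) := by
        simp only [extendByIdentity, Matrix.add_mul, Matrix.mul_add, Matrix.one_mul,
          Matrix.mul_one]
        abel
    _ = 1 + W * ((A - 1) + (B - 1) + (A - 1) * (B - 1)) * Wᴴ := by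
        rw [hAB, Matrix.mul_add, Matrix.mul_add, Matrix.add_mul, Matrix.add_mul]
    _ = extendByIdentity W (A * B) := by
        rw [extendByIdentity,
          show (A - 1) + (B - 1) + (A - 1) * (B - 1) = A * B - 1 by noncomm_ring]

theorem extendByIdentity_mem_unitaryGroup (hW : Wᴴ * W = 1) {M : Matrix k k R}
    (hM : M ∈ unitaryGroup k R) : extendByIdentity W M ∈ unitaryGroup n R := by
  rw [mem_unitaryGroup_iff'] at hM ⊢
  rw [star_extendByIdentity, extendByIdentity_mul_extendByIdentity hW, hM, extendByIdentity_one]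

theorem aeval_extendByIdentity_mul (hW : Wᴴ * W = 1) (M : Matrix k k R) (p : R[X]) :
    aeval (extendByIdentity W M) p * W = W * aeval M p := by
  induction p using Polynomial.induction_on' with
  | add p q hp hq => simp only [map_add, Matrix.add_mul, Matrix.mul_add, hp, hq]
  | monomial j r =>
    have hpow : extendByIdentity W M ^ j * W = W * M ^ j := by
      induction j with
      | zero => simp
      | succ j ih => rw [pow_succ, Matrix.mul_assoc, extendByIdentity_mul hW, ← Matrix.mul_assoc,
          ih, Matrix.mul_assoc, pow_succ]
    simp only [aeval_monomial, Algebra.algebraMap_eq_smul_one, smul_mul_assoc, Matrix.one_mul,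
      Matrix.smul_mul, Matrix.mul_smul, hpow]

theorem aeval_extendByIdentity_charpoly_mul_X_sub_one (hW : Wᴴ * W = 1) (M : Matrix k k R) :
    aeval (extendByIdentity W M) (M.charpoly * (X - 1)) = 0 := by
  have hsub : extendByIdentity W M - 1 = W * (M - 1) * Wᴴ := add_sub_cancel_left _ _
  rw [map_mul, map_sub, aeval_X, map_one, hsub, ← Matrix.mul_assoc, ← Matrix.mul_assoc,
    aeval_extendByIdentity_mul hW, aeval_self_charpoly, Matrix.mul_zero, Matrix.zero_mul,
    Matrix.zero_mul]

end extendByIdentity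

section cayleyKlein

variable {R : Type*} [CommRing R] [StarRing R]

def cayleyKlein (c β : R) : Matrix (Fin 2) (Fin 2) R :=
  !![c, -star β; β, star c]

theorem cayleyKlein_mem_unitaryGroup {c β : R} (h : star c * c + star β * β = 1) :
    cayleyKlein c β ∈ unitaryGroup (Fin 2) R := by
  rw [mem_unitaryGroup_iff']
  ext i j
  fin_cases i <;> fin_cases j <;> simp [cayleyKlein, mul_apply, Fin.sum_univ_two]
  · exact h
  · ring
  · ring
  · linear_combination h

theorem cayleyKlein_mulVec_one_zero (c β : R) : cayleyKlein c β *ᵥ ![1, 0] = ![c, β] := by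
  ext i
  fin_cases i <;> simp [cayleyKlein]

theorem charpoly_cayleyKlein [Nontrivial R] (c β : R) :
    (cayleyKlein c β).charpoly = X ^ 2 - C (c + star c) * X + C (star c * c + star β * β) := by
  rw [charpoly_fin_two, cayleyKlein, trace_fin_two_of, det_fin_two_of]
  congr 2
  ring

end cayleyKlein

theorem mem_spectrum_extendByIdentity_cayleyKlein {n : Type*} [Fintype n] [DecidableEq n]
    [Nonempty n] {W : Matrix n (Fin 2) ℂ} (hW : Wᴴ * W = 1) {c β μ : ℂ}
    (h : star c * c + star β * β = 1)
    (hμ : μ ∈ spectrum ℂ (extendByIdentity W (cayleyKlein c β))) :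
    μ = 1 ∨ μ = Complex.exp (Real.arccos c.re * Complex.I) ∨
      μ = Complex.exp (-Real.arccos c.re * Complex.I) := by
  have hroot := spectrum.eval_eq_zero_of_aeval_eq_zero
    (aeval_extendByIdentity_charpoly_mul_X_sub_one hW (cayleyKlein c β)) hμ
  have hre : |c.re| ≤ 1 := by
    have hsq : ‖c‖ ^ 2 + ‖β‖ ^ 2 = 1 := by
      simp only [Complex.star_def, Complex.conj_mul'] at h
      exact_mod_cast h
    exact (Complex.abs_re_le_norm c).trans (by nlinarith [norm_nonneg c, sq_nonneg ‖β‖])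
  have htrace : c + star c = 2 * Complex.cos (Real.arccos c.re) := by
    rw [← Complex.ofReal_cos, Real.cos_arccos (abs_le.mp hre).1 (abs_le.mp hre).2,
      Complex.star_def, Complex.add_conj]
    push_cast
    ring
  rw [charpoly_cayleyKlein, htrace, h, C_1, ← X_sub_C_exp_mul_X_sub_C_exp] at hroot
  simp only [eval_mul, eval_sub, eval_X, eval_C, eval_one, mul_eq_zero, sub_eq_zero] at hroot
  tauto

end Matrix

theorem stmt6 {m : ℕ} (hm : 2 ≤ m) (a b : Fin m → ℂ)
    (ha : ∑ i, ‖a i‖ ^ 2 = 1) (hb : ∑ i, ‖b i‖ ^ 2 = 1) :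
    ∃ U ∈ Matrix.unitaryGroup (Fin m) ℂ, U.mulVec a = b ∧
      ∀ μ ∈ spectrum ℂ (U : Matrix (Fin m) (Fin m) ℂ), μ = 1 ∨
        μ = Complex.exp ((Real.arccos ((∑ i, (starRingEnd ℂ) (a i) * b i).re) : ℂ) * Complex.I) ∨
        μ = Complex.exp (-(Real.arccos ((∑ i, (starRingEnd ℂ) (a i) * b i).re) : ℂ) * Complex.I) := by
  set a' : EuclideanSpace ℂ (Fin m) := WithLp.toLp 2 a
  set b' : EuclideanSpace ℂ (Fin m) := WithLp.toLp 2 b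
  have ha' : ‖a'‖ = 1 := by simp [a', EuclideanSpace.norm_eq, ha]
  have hb' : ‖b'‖ = 1 := by simp [b', EuclideanSpace.norm_eq, hb]
  have hc : ⟪a', b'⟫_ℂ = ∑ i, (starRingEnd ℂ) (a i) * b i := by
    simp [a', b', EuclideanSpace.inner_toLp_toLp, dotProduct, mul_comm]
  rw [← hc]
  obtain ⟨v, β, hav, hdecomp⟩ :=
    exists_orthonormal_pair_eq_inner_smul_add_smul (𝕜 := ℂ) (by simpa using hm) ha' b'
  set c := ⟪a', b'⟫_ℂ
  have hnorm : star c * c + star β * β = 1 := by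
    have := hav.inner_sum ![c, β] ![c, β] Finset.univ
    simp [Fin.sum_univ_two, ← hdecomp, inner_self_eq_norm_sq_to_K, hb'] at this
    exact this.symm
  set W := Matrix.of fun i j => ![a', v] j i
  have hW : Wᴴ * W = 1 := conjTranspose_mul_self_eq_one_of_orthonormal hav
  have : NeZero m := ⟨by omega⟩
  refine ⟨extendByIdentity W (cayleyKlein c β),
    extendByIdentity_mem_unitaryGroup hW (cayleyKlein_mem_unitaryGroup hnorm), ?_,
    fun μ hμ => mem_spectrum_extendByIdentity_cayleyKlein hW hnorm hμ⟩
  have hWa : W *ᵥ ![1, 0] = a := by simp [W, mulVec_of_columns, a']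
  have hWb : W *ᵥ ![c, β] = b := by simp [W, mulVec_of_columns, ← hdecomp, b']
  rw [← hWa, extendByIdentity_mulVec_mulVec hW, cayleyKlein_mulVec_one_zero, hWb]
end

section
/- Let U be an r×r unitary with eigenangles θ_j ∈ (−π,π] and a, b unit vectors with U·a = b. If U has exactly two eigenangles θ₁, θ₂ with nonzero weight |⟨u_j,a⟩|², then |θ₁| + |θ₂| ≥ 2·arccos|⟨a,b⟩|. -/
/-!
Expanding `a` in the eigenbasis gives `⟪a, U a⟫ = z₁ e^{iθ₁} + z₂ e^{iθ₂}` with weights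
`z_j = |⟪u_j, a⟫|²` summing to `‖a‖² = 1`. Multiplying by `e^{-i(θ₁+θ₂)/2}` does not change the norm
and makes the real part exactly `cos ((θ₁ - θ₂) / 2)`, so `|⟪a, b⟫| ≥ cos ((θ₁ - θ₂) / 2)` and hence
`arccos |⟪a, b⟫| ≤ |θ₁ - θ₂| / 2 ≤ (|θ₁| + |θ₂|) / 2`.
-/

open Complex

theorem OrthonormalBasis.inner_self_apply_eq_sum_of_eigen {ι 𝕜 E : Type*} [RCLike 𝕜]
    [NormedAddCommGroup E] [InnerProductSpace 𝕜 E] [Fintype ι] (u : OrthonormalBasis ι 𝕜 E)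
    {U : E →ₗ[𝕜] E} {μ : ι → 𝕜} (hU : ∀ j, U (u j) = μ j • u j) (x : E) :
    inner 𝕜 x (U x) = ∑ j, ((‖inner 𝕜 (u j) x‖ ^ 2 : ℝ) : 𝕜) * μ j := by
  have hUx : U x = ∑ j, (μ j * inner 𝕜 (u j) x) • u j := by
    conv_lhs => rw [← u.sum_repr' x]
    simp only [map_sum, map_smul, hU, smul_smul, mul_comm]
  rw [hUx]
  nth_rw 1 [← u.sum_repr' x]
  rw [u.orthonormal.inner_sum]
  refine Finset.sum_congr rfl fun j _ => ?_
  rw [RCLike.ofReal_pow, ← RCLike.conj_mul]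
  ring

theorem Real.arccos_cos_le_abs (x : ℝ) : Real.arccos (Real.cos x) ≤ |x| := by
  rcases le_or_gt |x| Real.pi with hx | hx
  · rw [← Real.cos_abs, Real.arccos_cos (abs_nonneg x) hx]
  · exact (Real.arccos_le_pi _).trans hx.le

theorem Complex.cos_half_sub_le_norm_add_exp {z₁ z₂ : ℝ} (hz : z₁ + z₂ = 1) (x y : ℝ) :
    Real.cos ((x - y) / 2) ≤ ‖(z₁ : ℂ) * exp (x * I) + z₂ * exp (y * I)‖ := by
  set s := (x + y) / 2
  set d := (x - y) / 2
  have hrot : exp ((-s : ℝ) * I) * ((z₁ : ℂ) * exp (x * I) + z₂ * exp (y * I))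
      = z₁ * exp (d * I) + z₂ * exp ((-d : ℝ) * I) := by
    simp only [mul_add, mul_left_comm _ (z₁ : ℂ), mul_left_comm _ (z₂ : ℂ), ← exp_add]
    congr 3 <;> simp only [s, d] <;> push_cast <;> ring
  calc Real.cos d = (exp ((-s : ℝ) * I) * ((z₁ : ℂ) * exp (x * I) + z₂ * exp (y * I))).re := by
        rw [hrot]
        simp only [add_re, re_ofReal_mul, exp_ofReal_mul_I_re, Real.cos_neg, ← add_mul, hz,
          one_mul]
    _ ≤ ‖exp ((-s : ℝ) * I) * ((z₁ : ℂ) * exp (x * I) + z₂ * exp (y * I))‖ := re_le_norm _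
    _ = ‖(z₁ : ℂ) * exp (x * I) + z₂ * exp (y * I)‖ := by
        rw [norm_mul, norm_exp_ofReal_mul_I, one_mul]

theorem Complex.two_mul_arccos_norm_add_exp_le {z₁ z₂ : ℝ} (hz : z₁ + z₂ = 1) (x y : ℝ) :
    2 * Real.arccos ‖(z₁ : ℂ) * exp (x * I) + z₂ * exp (y * I)‖ ≤ |x| + |y| := by
  have hd : |(x - y) / 2| ≤ (|x| + |y|) / 2 := by
    rw [abs_div, abs_two]
    gcongr
    exact abs_sub _ _
  have := calc Real.arccos ‖(z₁ : ℂ) * exp (x * I) + z₂ * exp (y * I)‖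
      ≤ Real.arccos (Real.cos ((x - y) / 2)) :=
        Real.arccos_le_arccos (cos_half_sub_le_norm_add_exp hz x y)
    _ ≤ |(x - y) / 2| := Real.arccos_cos_le_abs _
  linarith

theorem stmt7_general {m : ℕ}
    (U : EuclideanSpace ℂ (Fin m) →ₗ[ℂ] EuclideanSpace ℂ (Fin m))
    (u : OrthonormalBasis (Fin m) ℂ (EuclideanSpace ℂ (Fin m))) (θ : Fin m → ℝ)
    (hU : ∀ j, U (u j) = Complex.exp ((θ j : ℂ) * Complex.I) • u j)
    (a b : EuclideanSpace ℂ (Fin m)) (ha : ‖a‖ = 1) (hab : U a = b)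
    (j₁ j₂ : Fin m) (hj : j₁ ≠ j₂)
    (hw : ∀ j, j ≠ j₁ → j ≠ j₂ → (inner ℂ (u j) a : ℂ) = 0) :
    2 * Real.arccos (‖(inner ℂ a b : ℂ)‖) ≤ |θ j₁| + |θ j₂| := by
  set z : Fin m → ℝ := fun j => ‖inner ℂ (u j) a‖ ^ 2
  have hz : ∀ j, j ≠ j₁ ∧ j ≠ j₂ → z j = 0 := fun j hj' => by simp [z, hw j hj'.1 hj'.2]
  have hinner : inner ℂ a b = (z j₁ : ℂ) * exp (θ j₁ * I) + z j₂ * exp (θ j₂ * I) := by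
    rw [← hab, u.inner_self_apply_eq_sum_of_eigen hU,
      Fintype.sum_eq_add j₁ j₂ hj fun j hj' => by simp [hw j hj'.1 hj'.2]]
    rfl
  have hsum : z j₁ + z j₂ = 1 := by
    rw [← Fintype.sum_eq_add j₁ j₂ hj hz, u.sum_sq_norm_inner_right, ha, one_pow]
  rw [hinner]
  exact two_mul_arccos_norm_add_exp_le hsum _ _

theorem stmt7 {m : ℕ}
    (U : EuclideanSpace ℂ (Fin m) →ₗ[ℂ] EuclideanSpace ℂ (Fin m))
    (u : OrthonormalBasis (Fin m) ℂ (EuclideanSpace ℂ (Fin m))) (θ : Fin m → ℝ)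
    (hθ : ∀ j, θ j ∈ Set.Ioc (-Real.pi) Real.pi)
    (hU : ∀ j, U (u j) = Complex.exp ((θ j : ℂ) * Complex.I) • u j)
    (a b : EuclideanSpace ℂ (Fin m)) (ha : ‖a‖ = 1) (hb : ‖b‖ = 1) (hab : U a = b)
    (j₁ j₂ : Fin m) (hj : j₁ ≠ j₂)
    (hw : ∀ j, j ≠ j₁ → j ≠ j₂ → (inner ℂ (u j) a : ℂ) = 0) :
    2 * Real.arccos (‖(inner ℂ a b : ℂ)‖) ≤ |θ j₁| + |θ j₂| :=
  stmt7_general U u θ hU a b ha hab j₁ j₂ hj hw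
end

section
/- Let z ∈ [0,1] and θ₁, θ₂ ∈ (−π,π] with c = z·e^{iθ₁} + (1−z)·e^{iθ₂}. Then |θ₁| + |θ₂| ≥ 2·arccos|c|. -/
/-!
Expanding the norm gives `‖c‖² = 1 - 2z(1-z)(1 - cos(θ₁-θ₂))`, so
`‖c‖² - cos²((θ₁-θ₂)/2) = (1-2z)²(1 - cos(θ₁-θ₂))/2 ≥ 0`: no point of the line through
`e^{iθ₁}` and `e^{iθ₂}` is closer to the origin than the midpoint of the chord. Hence
`2 arccos ‖c‖ ≤ |θ₁ - θ₂|` (trivially once `|θ₁ - θ₂| ≥ π`, as `arccos` of a nonnegative number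
is at most `π/2`), and `|θ₁ - θ₂| ≤ |θ₁| + |θ₂|`.
-/

open Real Complex

lemma sq_norm_mul_exp_add_one_sub_mul_exp (z α β : ℝ) :
    ‖(z : ℂ) * exp (α * I) + ((1 : ℂ) - z) * exp (β * I)‖ ^ 2 =
      1 - 2 * z * (1 - z) * (1 - Real.cos (α - β)) := by
  rw [Complex.sq_norm, Complex.normSq_apply]
  simp only [add_re, add_im, mul_re, mul_im, exp_ofReal_mul_I_re, exp_ofReal_mul_I_im,
    ofReal_re, ofReal_im, sub_re, sub_im, one_re, one_im, Real.cos_sub]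
  linear_combination z ^ 2 * Real.sin_sq_add_cos_sq α + (1 - z) ^ 2 * Real.sin_sq_add_cos_sq β

lemma abs_cos_half_sub_le_norm_mul_exp_add_one_sub_mul_exp (z α β : ℝ) :
    |Real.cos ((α - β) / 2)| ≤ ‖(z : ℂ) * exp (α * I) + ((1 : ℂ) - z) * exp (β * I)‖ := by
  have hsq : Real.cos ((α - β) / 2) ^ 2 ≤
      ‖(z : ℂ) * exp (α * I) + ((1 : ℂ) - z) * exp (β * I)‖ ^ 2 := by
    rw [sq_norm_mul_exp_add_one_sub_mul_exp, Real.cos_sq, show 2 * ((α - β) / 2) = α - β by ring]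
    nlinarith [mul_nonneg (sub_nonneg.2 (Real.cos_le_one (α - β))) (sq_nonneg (1 - 2 * z))]
  exact (sq_le_sq.1 hsq).trans_eq (abs_norm _)

lemma two_mul_arccos_norm_mul_exp_add_one_sub_mul_exp_le (z α β : ℝ) :
    2 * arccos ‖(z : ℂ) * exp (α * I) + ((1 : ℂ) - z) * exp (β * I)‖ ≤ |α - β| := by
  set c := (z : ℂ) * exp (α * I) + ((1 : ℂ) - z) * exp (β * I)
  rcases le_or_gt π |α - β| with hπ | hπ
  · linarith [arccos_le_pi_div_two.2 (norm_nonneg c)]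
  · have hcos : Real.cos (|α - β| / 2) ≤ ‖c‖ := by
      rw [← abs_two, ← abs_div, Real.cos_abs]
      exact (le_abs_self _).trans (abs_cos_half_sub_le_norm_mul_exp_add_one_sub_mul_exp z α β)
    have harccos := antitone_arccos hcos
    rw [arccos_cos (by positivity) (by linarith [pi_pos])] at harccos
    linarith

theorem stmt8_general (z θ₁ θ₂ : ℝ) :
    2 * Real.arccos (‖(z : ℂ) * Complex.exp (θ₁ * Complex.I) +
        ((1 : ℂ) - z) * Complex.exp (θ₂ * Complex.I)‖) ≤ |θ₁| + |θ₂| :=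
  (two_mul_arccos_norm_mul_exp_add_one_sub_mul_exp_le z θ₁ θ₂).trans (abs_sub θ₁ θ₂)

theorem stmt8 (z θ₁ θ₂ : ℝ) (hz0 : 0 ≤ z) (hz1 : z ≤ 1)
    (hθ₁ : θ₁ ∈ Set.Ioc (-Real.pi) Real.pi) (hθ₂ : θ₂ ∈ Set.Ioc (-Real.pi) Real.pi) :
    2 * Real.arccos (‖(z : ℂ) * Complex.exp (θ₁ * Complex.I) +
        ((1 : ℂ) - z) * Complex.exp (θ₂ * Complex.I)‖) ≤ |θ₁| + |θ₂| :=
  stmt8_general z θ₁ θ₂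
end

section
/- Let a₁,…,a_n and b₁,…,b_n be orthonormal sets in ℂ^r, and for each i let U_i be a unitary acting as the identity on the orthogonal complement of span{a_i, a_i⊥} (where a_i⊥ is the component of b_i orthogonal to a_i, normalized), with U_i·a_i = b_i, and suppose a_i = U_{i−1}···U₁·e_i. Then for all i and j ≥ 1: U_{i+j}···U_{i+1}U_i·a_i = b_i. -/
/-- The composition `U (k-1) ∘ ⋯ ∘ U 1 ∘ U 0` of the first `k` unitaries. -/
noncomputable def prodUpTo {E : Type*} [NormedAddCommGroup E] [InnerProductSpace ℂ E]
    (U : ℕ → (E ≃ₗᵢ[ℂ] E)) : ℕ → (E ≃ₗᵢ[ℂ] E)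
  | 0 => LinearIsometryEquiv.refl ℂ E
  | (k + 1) => (prodUpTo U k).trans (U k)

section

variable {E : Type*} [NormedAddCommGroup E] [InnerProductSpace ℂ E]

theorem prodUpTo_succ_apply (U : ℕ → (E ≃ₗᵢ[ℂ] E)) (k : ℕ) (x : E) :
    prodUpTo U (k + 1) x = U k (prodUpTo U k x) :=
  rfl

/- `U m` fixes `b i` for `i < m`: by induction `b i = prodUpTo U m (e i)`, which is orthogonal to
`prodUpTo U m (e m)` because `prodUpTo U m` preserves inner products, and `b i` is orthogonal
to `b m`. -/
theorem prodUpTo_apply_eq_of_lt {n : ℕ} {e b : ℕ → E} {U : ℕ → (E ≃ₗᵢ[ℂ] E)}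
    (he : ∀ i k, i < n → k < n → i ≠ k → (inner ℂ (e i) (e k) : ℂ) = 0)
    (hb : ∀ i k, i < n → k < n → i ≠ k → (inner ℂ (b i) (b k) : ℂ) = 0)
    (hmap : ∀ i, i < n → U i (prodUpTo U i (e i)) = b i)
    (hid : ∀ i, i < n → ∀ x : E,
      (inner ℂ (prodUpTo U i (e i)) x : ℂ) = 0 → (inner ℂ (b i) x : ℂ) = 0 → U i x = x) :
    ∀ m i, i < m → m ≤ n → prodUpTo U m (e i) = b i := by
  intro m
  induction m with
  | zero => intro i hi; omega
  | succ m ih =>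
    intro i him (hmn : m < n)
    rw [prodUpTo_succ_apply]
    obtain hlt | rfl := Nat.lt_succ_iff_lt_or_eq.mp him
    · have hprev : prodUpTo U m (e i) = b i := ih i hlt hmn.le
      have hmi : m ≠ i := hlt.ne'
      rw [hprev]
      refine hid m hmn _ ?_ (hb m i hmn (by omega) hmi)
      rw [← hprev, LinearIsometryEquiv.inner_map_map]
      exact he m i hmn (by omega) hmi
    · exact hmap i hmn

end

theorem stmt10 {E : Type*} [NormedAddCommGroup E] [InnerProductSpace ℂ E]
    (n : ℕ) (e b : ℕ → E) (U : ℕ → (E ≃ₗᵢ[ℂ] E))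
    (he : ∀ i k, i < n → k < n → (inner ℂ (e i) (e k) : ℂ) = if i = k then 1 else 0)
    (hbo : ∀ i k, i < n → k < n → (inner ℂ (b i) (b k) : ℂ) = if i = k then 1 else 0)
    (hmap : ∀ i, i < n → U i (prodUpTo U i (e i)) = b i)
    (hid : ∀ i, i < n → ∀ x : E,
      (inner ℂ (prodUpTo U i (e i)) x : ℂ) = 0 → (inner ℂ (b i) x : ℂ) = 0 → U i x = x) :
    ∀ i j, 1 ≤ j → i + j < n → prodUpTo U (i + j + 1) (e i) = b i := by
  intro i j _ hij
  refine prodUpTo_apply_eq_of_lt (fun i k hi hk hik => ?_) (fun i k hi hk hik => ?_) hmap hid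
    (i + j + 1) i (by omega) (by omega)
  · rw [he i k hi hk, if_neg hik]
  · rw [hbo i k hi hk, if_neg hik]
end

section
/- With the setup of the successive construction (b_i orthonormal, a₁ = e₁, a_i = U_{i−1}···U₁e_i, each U_i unitary with U_i a_i = b_i acting as identity outside span{a_i, b_i}), if additionally ⟨b_j, e_i⟩ = 0 for all j < i ≤ n, then a_i = e_i for all i. -/
/-! By strong induction on `i`: once `a_j = e_j` for all `j < i`, the vector `e_i` is orthogonal
to both `a_j = e_j` and `b_j`, so every `U_j` with `j < i` fixes it, and hence so does
`U_{i-1} ⋯ U_0`. -/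

theorem prodUpTo_apply_eq_self {E : Type*} [NormedAddCommGroup E] [InnerProductSpace ℂ E]
    (U : ℕ → (E ≃ₗᵢ[ℂ] E)) {x : E} : ∀ {k : ℕ}, (∀ j < k, U j x = x) → prodUpTo U k x = x
  | 0, _ => rfl
  | k + 1, h => by
    change U k (prodUpTo U k x) = x
    rw [prodUpTo_apply_eq_self U fun j hj => h j (hj.trans k.lt_succ_self), h k k.lt_succ_self]

theorem stmt11_general {E : Type*} [NormedAddCommGroup E] [InnerProductSpace ℂ E]
    (n : ℕ) (e b : ℕ → E) (U : ℕ → (E ≃ₗᵢ[ℂ] E))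
    (he : ∀ i k, i < n → k < n → (inner ℂ (e i) (e k) : ℂ) = if i = k then 1 else 0)
    (hid : ∀ i, i < n → ∀ x : E,
      (inner ℂ (prodUpTo U i (e i)) x : ℂ) = 0 → (inner ℂ (b i) x : ℂ) = 0 → U i x = x)
    (htri : ∀ j i, j < i → i < n → (inner ℂ (b j) (e i) : ℂ) = 0) :
    ∀ i, i < n → prodUpTo U i (e i) = e i := by
  intro i
  induction i using Nat.strong_induction_on with
  | _ i ih =>
    intro hin
    refine prodUpTo_apply_eq_self U fun j hj => hid j (hj.trans hin) (e i) ?_ (htri j i hj hin)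
    rw [ih j hj (hj.trans hin), he j i (hj.trans hin) hin, if_neg hj.ne]

theorem stmt11 {E : Type*} [NormedAddCommGroup E] [InnerProductSpace ℂ E]
    (n : ℕ) (e b : ℕ → E) (U : ℕ → (E ≃ₗᵢ[ℂ] E))
    (he : ∀ i k, i < n → k < n → (inner ℂ (e i) (e k) : ℂ) = if i = k then 1 else 0)
    (hbo : ∀ i k, i < n → k < n → (inner ℂ (b i) (b k) : ℂ) = if i = k then 1 else 0)
    (hmap : ∀ i, i < n → U i (prodUpTo U i (e i)) = b i)
    (hid : ∀ i, i < n → ∀ x : E,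
      (inner ℂ (prodUpTo U i (e i)) x : ℂ) = 0 → (inner ℂ (b i) x : ℂ) = 0 → U i x = x)
    (htri : ∀ j i, j < i → i < n → (inner ℂ (b j) (e i) : ℂ) = 0) :
    ∀ i, i < n → prodUpTo U i (e i) = e i :=
  stmt11_general n e b U he hid htri
end

section
/- Let F₁,…,F_d be n×n matrices with F₁ = √p·I, p ∈ [0,1], and Tr(F_j) = 0 for j ≥ 2. Then min over v with ‖v‖ ≤ 1 of max_i arccos[Re(λ_i(Σ_j v_j F_j))] equals arccos(√p), achieved at v = (1,0,…,0). -/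
/-!
The real parts of the eigenvalues of `∑ j, v j • F j` average to `Re (tr) / n = √p · Re (v 0)`,
which is at most `√p` because `‖v 0‖ ≤ 1`. Hence some eigenvalue has real part at most `√p`, and
`arccos` is antitone. At `v = (1, 0, …, 0)` the matrix is `√p • 1`, whose only eigenvalue is `√p`.
-/

open Polynomial

theorem Multiset.exists_le_of_sum_map_le_card_nsmul {α : Type*} {s : Multiset α} (hs : s ≠ 0)
    {f : α → ℝ} {c : ℝ} (h : (s.map f).sum ≤ Multiset.card s • c) : ∃ x ∈ s, f x ≤ c := by
  contrapose! h
  simpa using Multiset.sum_lt_sum_of_nonempty hs h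

namespace Matrix

variable {ι : Type*} [Fintype ι] [DecidableEq ι]

theorem card_roots_charpoly {K : Type*} [Field K] [IsAlgClosed K] (A : Matrix ι ι K) :
    Multiset.card A.charpoly.roots = Fintype.card ι := by
  rw [← (IsAlgClosed.splits _).natDegree_eq_card_roots, charpoly_natDegree_eq_dim]

theorem exists_mem_roots_charpoly_re_le [Nonempty ι] (A : Matrix ι ι ℂ) {c : ℝ}
    (h : A.trace.re ≤ Fintype.card ι * c) : ∃ μ ∈ A.charpoly.roots, μ.re ≤ c := by
  have hcard := A.card_roots_charpoly
  refine Multiset.exists_le_of_sum_map_le_card_nsmul ?_ ?_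
  · rw [← Multiset.card_pos, hcard]
    exact Fintype.card_pos
  · rwa [hcard, nsmul_eq_mul, ← Complex.coe_reAddGroupHom, ← map_multiset_sum,
      ← trace_eq_sum_roots_charpoly]

theorem roots_charpoly_smul_one {K : Type*} [Field K] (c : K) :
    (c • (1 : Matrix ι ι K)).charpoly.roots = Fintype.card ι • {c} := by
  rw [smul_one_eq_diagonal, charpoly_diagonal, Finset.prod_const, roots_pow, roots_X_sub_C,
    Finset.card_univ]

omit [DecidableEq ι] in
theorem trace_sum_smul_eq_of_trace_eq_zero {κ R : Type*} [Fintype κ] [CommSemiring R]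
    (v : κ → R) (F : κ → Matrix ι ι R) (i : κ) (hF : ∀ j, j ≠ i → (F j).trace = 0) :
    (∑ j, v j • F j).trace = v i * (F i).trace := by
  rw [trace_sum, Finset.sum_eq_single i (fun j _ hj => by rw [trace_smul, hF j hj, smul_zero])
    (by simp), trace_smul, smul_eq_mul]

end Matrix

theorem norm_le_one_of_sum_norm_sq_le_one {κ E : Type*} [Fintype κ] [SeminormedAddGroup E]
    {v : κ → E} (hv : ∑ j, ‖v j‖ ^ 2 ≤ 1) (i : κ) : ‖v i‖ ≤ 1 := by
  refine (pow_le_one_iff_of_nonneg (norm_nonneg _) two_ne_zero).mp ?_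
  exact (Finset.single_le_sum (fun j _ => by positivity) (Finset.mem_univ i)).trans hv

theorem stmt13_general {n d : ℕ} [NeZero n] [NeZero d] (p : ℝ)
    (F : Fin d → Matrix (Fin n) (Fin n) ℂ)
    (hF0 : F 0 = ((Real.sqrt p : ℝ) : ℂ) • 1)
    (hFj : ∀ j, j ≠ 0 → (F j).trace = 0) :
    (∀ v : Fin d → ℂ, ∑ j, ‖v j‖ ^ 2 ≤ 1 →
        ∃ μ ∈ (∑ j, v j • F j).charpoly.roots,
          Real.arccos (Real.sqrt p) ≤ Real.arccos μ.re) ∧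
      ∀ μ ∈ (∑ j, (if j = 0 then (1 : ℂ) else 0) • F j).charpoly.roots,
        Real.arccos μ.re = Real.arccos (Real.sqrt p) := by
  refine ⟨fun v hv => ?_, fun μ hμ => ?_⟩
  · have htrace : (∑ j, v j • F j).trace.re = n * (Real.sqrt p * (v 0).re) := by
      rw [Matrix.trace_sum_smul_eq_of_trace_eq_zero v F 0 hFj, hF0, Matrix.trace_smul,
        Matrix.trace_one, Fintype.card_fin]
      simp [Complex.mul_re]
      ring
    have hre : Real.sqrt p * (v 0).re ≤ Real.sqrt p :=
      mul_le_of_le_one_right (Real.sqrt_nonneg p)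
        ((Complex.re_le_norm _).trans (norm_le_one_of_sum_norm_sq_le_one hv 0))
    obtain ⟨μ, hμ, hμp⟩ := (∑ j, v j • F j).exists_mem_roots_charpoly_re_le
      (c := Real.sqrt p) (by rw [htrace, Fintype.card_fin]; gcongr)
    exact ⟨μ, hμ, Real.arccos_le_arccos hμp⟩
  · simp only [ite_smul, one_smul, zero_smul, Finset.sum_ite_eq', Finset.mem_univ, if_true, hF0,
      Matrix.roots_charpoly_smul_one, Multiset.mem_nsmul, Multiset.mem_singleton] at hμ
    rw [hμ.2, Complex.ofReal_re]

theorem stmt13 {n d : ℕ} [NeZero n] [NeZero d] (p : ℝ) (hp0 : 0 ≤ p) (hp1 : p ≤ 1)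
    (F : Fin d → Matrix (Fin n) (Fin n) ℂ)
    (hF0 : F 0 = ((Real.sqrt p : ℝ) : ℂ) • 1)
    (hFj : ∀ j, j ≠ 0 → (F j).trace = 0) :
    (∀ v : Fin d → ℂ, ∑ j, ‖v j‖ ^ 2 ≤ 1 →
        ∃ μ ∈ (∑ j, v j • F j).charpoly.roots,
          Real.arccos (Real.sqrt p) ≤ Real.arccos μ.re) ∧
      ∀ μ ∈ (∑ j, (if j = 0 then (1 : ℂ) else 0) • F j).charpoly.roots,
        Real.arccos μ.re = Real.arccos (Real.sqrt p) :=
  stmt13_general p F hF0 hFj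
end
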